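/- Let $\ell$ be a nonnegative integer and let $C_0, C_1$ be the $(\ell+1)\times(\ell+1)$ matrices $C_0 = \sum_{j=1}^{\ell} j(\ell-j+1)(E_{j,j-1} - E_{j,j})$ and $C_1 = \sum_{j=0}^{\ell-1} (j+1)(\ell-j)(E_{j,j+1} - E_{j,j})$, where $E_{ij}$ are elementary matrices (indices from $0$ to $\ell$). Then the matrix $C_0 + C_1$ is diagonalizable with eigenvalues $-j(j+1)$ for $0 \le j \le \ell$, and for each $j$ the vector $u_j = (U_{0,j}, \dots, U_{\ell,j})$ with $U_{k,j} = {}_3F_2(-j,-k,j+1; 1,-\ell; 1)$ is a corresponding eigenvector. -/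

import Mathlib

/-- Pochhammer symbol (rising factorial) over ℂ. -/
noncomputable def poch (x : ℂ) (m : ℕ) : ℂ := ∏ i ∈ Finset.range m, (x + i)

/-- Hahn polynomial value `hahnU ℓ a b = ₃F₂(-b, -a, b+1; 1, -ℓ; 1)` (terminating sum). -/
noncomputable def hahnU (ℓ j k : ℕ) : ℂ :=
  ∑ m ∈ Finset.range (k + 1),
    (poch (-(k : ℂ)) m * poch (-(j : ℂ)) m * poch ((k : ℂ) + 1) m) /
      (poch 1 m * poch (-(ℓ : ℂ)) m * (Nat.factorial m : ℂ))

open Matrix in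
/-- `C₀ = ∑_{j=1}^{ℓ} j(ℓ-j+1)(E_{j,j-1} - E_{j,j})`: the `j = 0` term has vanishing
coefficient so the sum may be taken over all `j`. -/
noncomputable def C0 (ℓ : ℕ) : Matrix (Fin (ℓ + 1)) (Fin (ℓ + 1)) ℂ :=
  ∑ j : Fin (ℓ + 1),
    (((j : ℕ) : ℂ) * ((ℓ : ℂ) - (j : ℕ) + 1)) •
      (Matrix.single j (j - 1) 1 - Matrix.single j j 1)

open Matrix in
/-- `C₁ = ∑_{j=0}^{ℓ-1} (j+1)(ℓ-j)(E_{j,j+1} - E_{j,j})`: the `j = ℓ` term has vanishing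
coefficient so the sum may be taken over all `j`. -/
noncomputable def C1 (ℓ : ℕ) : Matrix (Fin (ℓ + 1)) (Fin (ℓ + 1)) ℂ :=
  ∑ j : Fin (ℓ + 1),
    ((((j : ℕ) : ℂ) + 1) * ((ℓ : ℂ) - (j : ℕ))) •
      (Matrix.single j (j + 1) 1 - Matrix.single j j 1)

/-! ### Auxiliary lemmas -/

lemma poch_zero' (x : ℂ) : poch x 0 = 1 := by simp [poch]

lemma poch_succ (x : ℂ) (m : ℕ) : poch x (m+1) = poch x m * (x + m) := by
  simp [poch, Finset.prod_range_succ]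

lemma poch_succ' (x : ℂ) (m : ℕ) : poch x (m+1) = x * poch (x+1) m := by
  rw [poch, Finset.prod_range_succ', poch, mul_comm]
  congr 1
  · simp
  · exact Finset.prod_congr rfl fun i _ => by push_cast; ring

lemma poch_arg (x y : ℂ) (h : x = y) (m : ℕ) : poch x m = poch y m := by rw [h]

lemma poch_rel (x : ℂ) (m : ℕ) : poch (-x) m * (-x + m) = -x * poch (1-x) m := by
  have h1 := poch_succ (-x) m
  have h2 := poch_succ' (-x) m
  rw [poch_arg (-x+1) (1-x) (by ring)] at h2
  rw [← h1, h2]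

/-- The second-order difference operator acting on `poch (-x) (m+1)`. -/
lemma opA (L x : ℂ) (m : ℕ) :
    x*(L-x+1)*(poch (-(x-1)) (m+1) - poch (-x) (m+1))
      + (x+1)*(L-x)*(poch (-(x+1)) (m+1) - poch (-x) (m+1))
    = -((m:ℂ)+1)*((m:ℂ)+2)*poch (-x) (m+1) - ((m:ℂ)+1)^2*(L-(m:ℂ))*poch (-x) m := by
  have hP : poch (-x) (m+1) = poch (-x) m * (-x + m) := poch_succ _ _
  have hQ : poch (-(x-1)) (m+1) = poch (1-x) m * ((1-x) + m) := by
    rw [poch_arg (-(x-1)) (1-x) (by ring)]; exact poch_succ _ _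
  have hR : poch (-(x+1)) (m+1) = -(x+1) * poch (-x) m := by
    rw [poch_succ' (-(x+1)) m, poch_arg (-(x+1)+1) (-x) (by ring)]
  have hrel := poch_rel x m
  rw [hP, hQ, hR]
  linear_combination ((L-x+1)*(1-x+(m:ℂ))) * hrel

lemma poch_one_ne (m : ℕ) : poch 1 m ≠ 0 := by
  rw [poch]
  refine Finset.prod_ne_zero_iff.2 fun i _ => ?_
  have : ((1:ℂ) + i) = ((i+1 : ℕ) : ℂ) := by push_cast; ring
  rw [this]; exact_mod_cast Nat.succ_ne_zero i

lemma poch_negl_ne (ℓ m : ℕ) (hm : m ≤ ℓ) : poch (-(ℓ:ℂ)) m ≠ 0 := by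
  rw [poch]
  refine Finset.prod_ne_zero_iff.2 fun i hi => fun h => ?_
  simp only [Finset.mem_range] at hi
  have : (i:ℂ) = (ℓ:ℂ) := by linear_combination h
  have : i = ℓ := by exact_mod_cast this
  omega

/-- The `x`-independent part of the `m`-th term of the Hahn hypergeometric sum. -/
noncomputable def cc (ℓ n m : ℕ) : ℂ :=
  poch (-(n:ℂ)) m * poch ((n:ℂ)+1) m / (poch 1 m * poch (-(ℓ:ℂ)) m * (Nat.factorial m : ℂ))

lemma cc_zero (ℓ n : ℕ) : cc ℓ n 0 = 1 := by simp [cc, poch_zero']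

lemma cc_rec (ℓ n m : ℕ) (hm : m < n) (hn : n ≤ ℓ) :
    ((m:ℂ)+1)^2 * ((ℓ:ℂ) - m) * cc ℓ n (m+1) = ((n:ℂ)-m)*((n:ℂ)+m+1) * cc ℓ n m := by
  have h1 : poch 1 m ≠ 0 := poch_one_ne m
  have h2 : poch (-(ℓ:ℂ)) m ≠ 0 := poch_negl_ne ℓ m (by omega)
  have h3 : (Nat.factorial m : ℂ) ≠ 0 := Nat.cast_ne_zero.2 (Nat.factorial_ne_zero m)
  have h4 : (-(ℓ:ℂ) + m) ≠ 0 := by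
    intro h
    have : (m:ℂ) = (ℓ:ℂ) := by linear_combination h
    have : m = ℓ := by exact_mod_cast this
    omega
  have h5 : ((1:ℂ) + m) ≠ 0 := by
    have : ((1:ℂ) + m) = ((m+1 : ℕ) : ℂ) := by push_cast; ring
    rw [this]; exact_mod_cast Nat.succ_ne_zero m
  have h6 : ((m+1).factorial : ℂ) = (Nat.factorial m : ℂ) * ((m:ℂ)+1) := by
    rw [Nat.factorial_succ]; push_cast; ring
  rw [cc, cc, poch_succ, poch_succ, poch_succ, poch_succ, h6,
    mul_div_assoc', mul_div_assoc', div_eq_div_iff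
      (by exact mul_ne_zero (mul_ne_zero (mul_ne_zero h1 h5) (mul_ne_zero h2 h4)) (mul_ne_zero h3 (by
        have : ((m:ℂ)+1) = ((m+1 : ℕ) : ℂ) := by push_cast; ring
        rw [this]; exact_mod_cast Nat.succ_ne_zero m)))
      (mul_ne_zero (mul_ne_zero h1 h2) h3)]
  ring

/-- The Hahn polynomial as a function of a complex variable. -/
noncomputable def GG (ℓ n : ℕ) (y : ℂ) : ℂ :=
  ∑ m ∈ Finset.range (n+1), poch (-y) m * cc ℓ n m

/-- The Hahn difference equation, for an arbitrary complex argument. -/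
lemma key (ℓ n : ℕ) (hn : n ≤ ℓ) (x : ℂ) :
    x*((ℓ:ℂ)-x+1)*(GG ℓ n (x-1) - GG ℓ n x) + (x+1)*((ℓ:ℂ)-x)*(GG ℓ n (x+1) - GG ℓ n x)
    = -(n:ℂ)*((n:ℂ)+1) * GG ℓ n x := by
  set L : ℂ := (ℓ:ℂ) with hL
  have lhs_eq : x*(L-x+1)*(GG ℓ n (x-1) - GG ℓ n x) + (x+1)*(L-x)*(GG ℓ n (x+1) - GG ℓ n x)
      = ∑ m ∈ Finset.range (n+1),
          (x*(L-x+1)*(poch (-(x-1)) m - poch (-x) m)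
            + (x+1)*(L-x)*(poch (-(x+1)) m - poch (-x) m)) * cc ℓ n m := by
    rw [GG, GG, GG, ← Finset.sum_sub_distrib, ← Finset.sum_sub_distrib,
      Finset.mul_sum, Finset.mul_sum, ← Finset.sum_add_distrib]
    exact Finset.sum_congr rfl fun m _ => by ring
  have rhs_eq : -(n:ℂ)*((n:ℂ)+1) * GG ℓ n x
      = ∑ m ∈ Finset.range (n+1), -(n:ℂ)*((n:ℂ)+1) * (poch (-x) m * cc ℓ n m) := by
    rw [GG, Finset.mul_sum]
  rw [lhs_eq, rhs_eq, Finset.sum_range_succ', Finset.sum_range_succ']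
  have step : ∀ m ∈ Finset.range n,
      (x*(L-x+1)*(poch (-(x-1)) (m+1) - poch (-x) (m+1))
        + (x+1)*(L-x)*(poch (-(x+1)) (m+1) - poch (-x) (m+1))) * cc ℓ n (m+1)
      = -(n:ℂ)*((n:ℂ)+1) * (poch (-x) (m+1) * cc ℓ n (m+1))
        + ((((n:ℂ)-((m+1:ℕ):ℂ))*((n:ℂ)+((m+1:ℕ):ℂ)+1)*(poch (-x) (m+1) * cc ℓ n (m+1)))
          - (((n:ℂ)-m)*((n:ℂ)+m+1)*(poch (-x) m * cc ℓ n m))) := by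
    intro m hm
    have hmn : m < n := Finset.mem_range.1 hm
    have h1 := opA L x m
    have h2 := cc_rec ℓ n m hmn hn
    push_cast
    linear_combination (cc ℓ n (m+1)) * h1 - (poch (-x) m) * h2
  rw [Finset.sum_congr rfl step, Finset.sum_add_distrib,
    Finset.sum_range_sub (fun m => ((n:ℂ)-((m:ℕ):ℂ))*((n:ℂ)+((m:ℕ):ℂ)+1)*(poch (-x) m * cc ℓ n m))]
  simp only [poch_zero', cc_zero, Nat.cast_zero]
  ring

lemma hahnU_eq_GG (ℓ x n : ℕ) : hahnU ℓ x n = GG ℓ n (x:ℂ) :=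
  Finset.sum_congr rfl fun m _ => by rw [cc]; ring

lemma hahnU_x_zero (ℓ n : ℕ) : hahnU ℓ 0 n = 1 := by
  rw [hahnU, Finset.sum_eq_single 0]
  · simp [poch]
  · intro m _ hm
    have : poch (-((0:ℕ):ℂ)) m = 0 := by
      rw [poch]
      apply Finset.prod_eq_zero (Finset.mem_range.2 (Nat.pos_of_ne_zero hm))
      simp
    rw [this]; simp
  · intro h; simp at h

lemma mulVec_C (ℓ : ℕ) (v : Fin (ℓ+1) → ℂ) (k : Fin (ℓ+1)) :
    (C0 ℓ + C1 ℓ).mulVec v k =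
      ((k:ℕ):ℂ) * ((ℓ:ℂ) - (k:ℕ) + 1) * (v (k-1) - v k)
      + (((k:ℕ):ℂ)+1) * ((ℓ:ℂ) - (k:ℕ)) * (v (k+1) - v k) := by
  simp only [C0, C1, Matrix.add_mulVec, Matrix.mulVec, dotProduct, Matrix.sum_apply,
    Matrix.smul_apply, Matrix.sub_apply, Matrix.single, Matrix.of_apply, smul_eq_mul,
    Finset.sum_mul, Finset.sum_apply, Matrix.add_apply]
  simp only [ite_and, mul_sub, mul_ite, mul_one, mul_zero, Finset.sum_ite_eq',
    Finset.mem_univ, if_true, sub_mul, add_mul, ite_mul, one_mul, zero_mul,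
    Finset.sum_sub_distrib, Finset.sum_add_distrib, Finset.sum_ite_eq]

/-- The eigenvector equation. -/
lemma eigen_eq (ℓ : ℕ) (j : Fin (ℓ + 1)) :
    (C0 ℓ + C1 ℓ).mulVec (fun k : Fin (ℓ + 1) => hahnU ℓ (k : ℕ) (j : ℕ)) =
      (-((j : ℕ) : ℂ) * (((j : ℕ) : ℂ) + 1)) •
        fun k : Fin (ℓ + 1) => hahnU ℓ (k : ℕ) (j : ℕ) := by
  funext k
  have hj : (j:ℕ) ≤ ℓ := Nat.lt_succ_iff.mp j.isLt
  have hkey := key ℓ (j:ℕ) hj (((k:ℕ)):ℂ)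
  rw [mulVec_C]
  simp only [Pi.smul_apply, smul_eq_mul]
  have e1 : ((k:ℕ):ℂ) * ((ℓ:ℂ) - (k:ℕ) + 1)
        * (hahnU ℓ ((k-1 : Fin (ℓ+1)) : ℕ) (j:ℕ) - hahnU ℓ (k:ℕ) (j:ℕ))
      = ((k:ℕ):ℂ) * ((ℓ:ℂ) - (k:ℕ) + 1)
        * (GG ℓ (j:ℕ) (((k:ℕ):ℂ) - 1) - GG ℓ (j:ℕ) ((k:ℕ):ℂ)) := by
    rcases eq_or_ne (k:ℕ) 0 with h | h
    · rw [h]; simp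
    · have hsub : ((k - 1 : Fin (ℓ+1)) : ℕ) = (k:ℕ) - 1 := by
        rw [Fin.coe_sub_one, if_neg]
        intro h0
        exact h (by rw [h0]; rfl)
      have hcast : (((k:ℕ) - 1 : ℕ) : ℂ) = ((k:ℕ):ℂ) - 1 := by
        rw [Nat.cast_sub (Nat.one_le_iff_ne_zero.2 h), Nat.cast_one]
      rw [hsub, hahnU_eq_GG, hahnU_eq_GG, hcast]
  have e2 : (((k:ℕ):ℂ) + 1) * ((ℓ:ℂ) - (k:ℕ))
        * (hahnU ℓ ((k+1 : Fin (ℓ+1)) : ℕ) (j:ℕ) - hahnU ℓ (k:ℕ) (j:ℕ))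
      = (((k:ℕ):ℂ) + 1) * ((ℓ:ℂ) - (k:ℕ))
        * (GG ℓ (j:ℕ) (((k:ℕ):ℂ) + 1) - GG ℓ (j:ℕ) ((k:ℕ):ℂ)) := by
    rcases eq_or_ne (k:ℕ) ℓ with h | h
    · have : (ℓ:ℂ) - ((k:ℕ):ℂ) = 0 := by rw [h]; ring
      rw [this]; ring
    · have hadd : ((k + 1 : Fin (ℓ+1)) : ℕ) = (k:ℕ) + 1 := by
        rw [Fin.val_add_one, if_neg]
        intro h0
        exact h (by rw [h0]; simp [Fin.last])
      have hcast : (((k:ℕ) + 1 : ℕ) : ℂ) = ((k:ℕ):ℂ) + 1 := by push_cast; ring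
      rw [hadd, hahnU_eq_GG, hahnU_eq_GG, hcast]
  rw [e1, e2, hahnU_eq_GG]
  linear_combination hkey

/-- `C₀ + C₁` is diagonalizable with eigenvalues `-j(j+1)`, `0 ≤ j ≤ ℓ`, and the Hahn
vectors `u_j = (U_{0,j}, …, U_{ℓ,j})`, `U_{k,j} = ₃F₂(-j, -k, j+1; 1, -ℓ; 1)`, form a
corresponding eigenbasis (they are linearly independent eigenvectors). -/
theorem C0_add_C1_diagonalizable (ℓ : ℕ) :
    (∀ j : Fin (ℓ + 1),
      (C0 ℓ + C1 ℓ).mulVec (fun k : Fin (ℓ + 1) => hahnU ℓ (k : ℕ) (j : ℕ)) =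
        (-((j : ℕ) : ℂ) * (((j : ℕ) : ℂ) + 1)) •
          fun k : Fin (ℓ + 1) => hahnU ℓ (k : ℕ) (j : ℕ)) ∧
    LinearIndependent ℂ
      (fun j : Fin (ℓ + 1) => fun k : Fin (ℓ + 1) => hahnU ℓ (k : ℕ) (j : ℕ)) := by
  refine ⟨eigen_eq ℓ, ?_⟩
  apply Module.End.eigenvectors_linearIndependent'
    (Matrix.mulVecLin (C0 ℓ + C1 ℓ))
    (fun j : Fin (ℓ + 1) => -((j : ℕ) : ℂ) * (((j : ℕ) : ℂ) + 1))
  · -- injectivity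
    intro a b hab
    have h1 : ((a:ℕ) * ((a:ℕ) + 1) : ℕ) = ((b:ℕ) * ((b:ℕ) + 1) : ℕ) := by
      have : (((a:ℕ) * ((a:ℕ) + 1) : ℕ) : ℂ) = (((b:ℕ) * ((b:ℕ) + 1) : ℕ) : ℂ) := by
        push_cast
        linear_combination -hab
      exact_mod_cast this
    have : (a:ℕ) = (b:ℕ) := by nlinarith [h1]
    exact Fin.ext this
  · -- eigenvectors
    intro j
    constructor
    · rw [Module.End.mem_eigenspace_iff, Matrix.mulVecLin_apply]
      exact eigen_eq ℓ j
    · intro h0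
      have := congrFun h0 0
      simp only [Pi.zero_apply] at this
      rw [show ((0 : Fin (ℓ+1)) : ℕ) = 0 from rfl, hahnU_x_zero] at this
      exact one_ne_zero this
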